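/- arXiv:1502.04139 — 3 statements merged into one kernel-verified Lean document; each statement's English description precedes it below -/
import Mathlib

section
/- Let Q ⊂ ℝ² be an axis-parallel square of side length ℓ(Q), let 1 ≤ p < 2, δ > 0, and let u ∈ W^{1,1}(Q) be a function that is absolutely continuous on almost all line segments in Q parallel to the coordinate axes. Define A₀ = {x ∈ Q : u(x) ≤ 0} and A₁ = {x ∈ Q : u(x) ≥ 1}. If max{H¹(π₁(A₀)), H¹(π₂(A₀))} ≥ δ·ℓ(Q) and max{H¹(π₁(A₁)), H¹(π₂(A₁))} ≥ δ·ℓ(Q), then ∫_Q |∇u|^p dx ≥ C(δ, p) · ℓ(Q)^{2-p} for some constant C(δ, p) > 0 depending only on δ and p. -/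
/-!
By the fundamental theorem of calculus on lines, the oscillation of `u` along almost every
segment of the square parallel to an axis is at most the integral of `|∇u|` over that segment;
call a segment heavy when this oscillation is at least `1/3`. By symmetry, say `A₀` meets a set
`S₀` of vertical segments of measure `≥ δℓ`. If some segment of `S₀` and some horizontal segment
are both light, then `u < 2/3` on that horizontal segment, so it misses `A₁`. Hence either `S₀`
is heavy, or all horizontal segments meeting `A₁` are heavy, or (when `A₁` meets many vertical
segments) either every horizontal segment is heavy or every vertical segment meeting `A₁` is. In all cases
a family of parallel segments of total measure `≥ min(δ, 1) ℓ` is heavy, and Jensen's inequality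
on each of them gives `∫ |∇u|^p ≥ 3^{-p} ℓ^{1-p}` per unit length of the family.
-/

open Metric MeasureTheory Set
open scoped ENNReal

theorem rpow_lintegral_le_mul_lintegral_rpow {β : Type*} [MeasurableSpace β] (ν : Measure β)
    {p : ℝ} (hp : 1 ≤ p) (f : β → ℝ≥0∞) :
    (∫⁻ y, f y ∂ν) ^ p ≤ ν univ ^ (p - 1) * ∫⁻ y, f y ^ p ∂ν := by
  obtain ⟨g, hg, hgf, hfg⟩ := exists_measurable_le_lintegral_eq ν f
  have hp0 : 0 < p := by linarith
  have holder := eLpNorm'_le_eLpNorm'_mul_rpow_measure_univ one_pos hp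
    (hg.aestronglyMeasurable (μ := ν))
  simp only [eLpNorm'_eq_lintegral_enorm, enorm_eq_self, ENNReal.rpow_one, div_one] at holder
  calc (∫⁻ y, f y ∂ν) ^ p = (∫⁻ y, g y ∂ν) ^ p := by rw [hfg]
    _ ≤ ((∫⁻ y, g y ^ p ∂ν) ^ (1 / p) * ν univ ^ (1 - 1 / p)) ^ p := by gcongr
    _ = ν univ ^ (p - 1) * ∫⁻ y, g y ^ p ∂ν := by
      rw [ENNReal.mul_rpow_of_nonneg _ _ hp0.le, ← ENNReal.rpow_mul, ← ENNReal.rpow_mul,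
        one_div_mul_cancel hp0.ne', ENNReal.rpow_one, mul_comm, sub_mul, one_mul,
        one_div_mul_cancel hp0.ne']
    _ ≤ ν univ ^ (p - 1) * ∫⁻ y, f y ^ p ∂ν := by
      gcongr with y
      exact hgf y

section SliceEnergy

variable {α β : Type*} [MeasurableSpace α] [MeasurableSpace β] {μ : Measure α} {ν : Measure β}
  {G : α × β → ℝ≥0∞} {p : ℝ} {c : ℝ≥0∞}

theorem rpow_mul_measure_le_lintegral_rpow_prod_right [SFinite ν] (hp : 1 ≤ p)
    (hG : AEMeasurable G (μ.prod ν)) {E : Set α}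
    (hE : ∀ᵐ x ∂μ, x ∈ E → c ≤ ∫⁻ y, G (x, y) ∂ν) :
    c ^ p * μ E ≤ ν univ ^ (p - 1) * ∫⁻ z, G z ^ p ∂(μ.prod ν) := by
  set F := fun x => ν univ ^ (p - 1) * ∫⁻ y, G (x, y) ^ p ∂ν
  have hGp : AEMeasurable (fun z => G z ^ p) (μ.prod ν) := hG.pow_const p
  have hEF : E ≤ᵐ[μ] {x | c ^ p ≤ F x} := by
    filter_upwards [hE] with x hx hxE
    exact (ENNReal.rpow_le_rpow (hx hxE) (by linarith)).trans
      (rpow_lintegral_le_mul_lintegral_rpow ν hp _)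
  calc c ^ p * μ E ≤ c ^ p * μ {x | c ^ p ≤ F x} := mul_le_mul_right (measure_mono_ae hEF) _
    _ ≤ ∫⁻ x, F x ∂μ := mul_meas_ge_le_lintegral₀ (hGp.lintegral_prod_right'.const_mul _) _
    _ = ν univ ^ (p - 1) * ∫⁻ z, G z ^ p ∂(μ.prod ν) := by
      rw [lintegral_const_mul'' _ hGp.lintegral_prod_right', lintegral_prod _ hGp]

theorem rpow_mul_measure_le_lintegral_rpow_prod_left [SFinite μ] [SFinite ν] (hp : 1 ≤ p)
    (hG : AEMeasurable G (μ.prod ν)) {F : Set β}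
    (hF : ∀ᵐ y ∂ν, y ∈ F → c ≤ ∫⁻ x, G (x, y) ∂μ) :
    c ^ p * ν F ≤ μ univ ^ (p - 1) * ∫⁻ z, G z ^ p ∂(μ.prod ν) := by
  rw [← lintegral_prod_swap]
  exact rpow_mul_measure_le_lintegral_rpow_prod_right hp hG.prod_swap hF

end SliceEnergy

theorem ediam_image_le_lintegral_enorm {E : Type*} [NormedAddCommGroup E] [NormedSpace ℝ E]
    {f f' : ℝ → E} {a b : ℝ}
    (hf : ∀ s ∈ Icc a b, ∀ t ∈ Icc a b, f t - f s = ∫ r in s..t, f' r) :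
    ediam (f '' Icc a b) ≤ ∫⁻ r in Icc a b, ‖f' r‖ₑ := by
  refine ediam_image_le_iff.2 fun s hs t ht => ?_
  calc edist (f s) (f t) = ‖∫ r in uIoc t s, f' r‖ₑ := by
        rw [edist_eq_enorm_sub, hf t ht s hs,
          enorm_eq_iff_norm_eq.2 (intervalIntegral.norm_integral_eq_norm_integral_uIoc _)]
    _ ≤ ∫⁻ r in uIoc t s, ‖f' r‖ₑ := enorm_integral_le_lintegral_enorm _
    _ ≤ ∫⁻ r in Icc a b, ‖f' r‖ₑ :=
      lintegral_mono_set (uIoc_subset_uIcc.trans (ordConnected_Icc.uIcc_subset ht hs))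

theorem one_le_edist_of_nonpos_of_one_le {a b : ℝ} (ha : a ≤ 0) (hb : 1 ≤ b) : 1 ≤ edist a b := by
  rw [edist_dist, ENNReal.one_le_ofReal, Real.dist_eq, abs_sub_comm]
  exact le_abs.2 (Or.inl (by linarith))

noncomputable def lineOsc {α β : Type*} (u : α × β → ℝ) (J : Set β) (x : α) : ℝ≥0∞ :=
  ediam ((fun y => u (x, y)) '' J)

section Crossing

variable {α β : Type*} {u : α × β → ℝ} {I : Set α} {J : Set β}

theorem edist_lt_of_lineOsc_lt {x₀ x : α} {y₀ y : β} {a b : ℝ≥0∞} (hx₀ : x₀ ∈ I) (hy₀ : y₀ ∈ J)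
    (hx₀a : lineOsc u J x₀ < a) (hy : y ∈ J) (hyb : lineOsc (u ∘ Prod.swap) I y < b)
    (hx : x ∈ I) : edist (u (x₀, y₀)) (u (x, y)) < a + b :=
  calc edist (u (x₀, y₀)) (u (x, y))
      _ ≤ edist (u (x₀, y₀)) (u (x₀, y)) + edist (u (x₀, y)) (u (x, y)) := edist_triangle _ _ _
      _ < a + b := ENNReal.add_lt_add
        ((edist_le_ediam_of_mem (mem_image_of_mem _ hy₀) (mem_image_of_mem _ hy)).trans_lt hx₀a)
        ((edist_le_ediam_of_mem (mem_image_of_mem (fun x => u (x, y)) hx₀)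
          (mem_image_of_mem _ hx)).trans_lt hyb)

theorem inv_three_le_lineOsc_dichotomy :
    (∀ x ∈ Prod.fst '' {z | z ∈ I ×ˢ J ∧ u z ≤ 0}, 3⁻¹ ≤ lineOsc u J x) ∨
      ∀ y ∈ Prod.snd '' {z | z ∈ I ×ˢ J ∧ 1 ≤ u z}, 3⁻¹ ≤ lineOsc (u ∘ Prod.swap) I y := by
  refine or_iff_not_imp_left.2 fun h => ?_
  push Not at h
  obtain ⟨_, ⟨⟨x₀, y₀⟩, ⟨⟨hx₀, hy₀⟩, hu₀⟩, rfl⟩, hx₀_light⟩ := h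
  rintro _ ⟨⟨x₁, y⟩, ⟨⟨hx₁, hy⟩, hu₁⟩, rfl⟩
  by_contra! hy_light
  have hlt := edist_lt_of_lineOsc_lt hx₀ hy₀ hx₀_light hy hy_light hx₁
  refine (one_le_edist_of_nonpos_of_one_le hu₀ hu₁).not_gt (hlt.trans_le ?_)
  rw [← ENNReal.inv_three_add_inv_three]
  exact le_self_add

theorem inv_three_le_lineOsc_trichotomy :
    (∀ x ∈ Prod.fst '' {z | z ∈ I ×ˢ J ∧ u z ≤ 0}, 3⁻¹ ≤ lineOsc u J x) ∨
      (∀ y ∈ J, 3⁻¹ ≤ lineOsc (u ∘ Prod.swap) I y) ∨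
      ∀ x ∈ Prod.fst '' {z | z ∈ I ×ˢ J ∧ 1 ≤ u z}, 3⁻¹ ≤ lineOsc u J x := by
  refine or_iff_not_imp_left.2 fun h₀ => or_iff_not_imp_left.2 fun h => ?_
  push Not at h₀ h
  obtain ⟨_, ⟨⟨x₀, y₀⟩, ⟨⟨hx₀, hy₀⟩, hu₀⟩, rfl⟩, hx₀_light⟩ := h₀
  obtain ⟨y, hy, hy_light⟩ := h
  rintro _ ⟨⟨x₁, y₁⟩, ⟨⟨hx₁, hy₁⟩, hu₁⟩, rfl⟩
  by_contra! hx₁_light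
  have hlt := edist_lt_of_lineOsc_lt hx₀ hy₀ hx₀_light hy hy_light hx₁
  refine (one_le_edist_of_nonpos_of_one_le hu₀ hu₁).not_gt ?_
  calc edist (u (x₀, y₀)) (u (x₁, y₁))
      _ ≤ edist (u (x₀, y₀)) (u (x₁, y)) + edist (u (x₁, y)) (u (x₁, y₁)) := edist_triangle _ _ _
      _ < 3⁻¹ + 3⁻¹ + 3⁻¹ := ENNReal.add_lt_add hlt <|
        (edist_le_ediam_of_mem (mem_image_of_mem _ hy) (mem_image_of_mem _ hy₁)).trans_lt hx₁_light
      _ = 1 := ENNReal.inv_three_add_inv_three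

theorem image_fst_swap_eq_image_snd (P : ℝ → Prop) :
    Prod.fst '' {z | z ∈ J ×ˢ I ∧ P ((u ∘ Prod.swap) z)} =
      Prod.snd '' {z | z ∈ I ×ˢ J ∧ P (u z)} := by
  ext y
  simp only [mem_image, mem_ofPred_eq, mem_prod, Function.comp_apply, Prod.exists,
    Prod.swap_prod_mk]
  grind

theorem image_snd_swap_eq_image_fst (P : ℝ → Prop) :
    Prod.snd '' {z | z ∈ J ×ˢ I ∧ P ((u ∘ Prod.swap) z)} =
      Prod.fst '' {z | z ∈ I ×ˢ J ∧ P (u z)} :=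
  (image_fst_swap_eq_image_snd (u := u ∘ Prod.swap) P).symm

variable [MeasurableSpace α] [MeasurableSpace β] {μ : Measure α} {ν : Measure β} {m : ℝ≥0∞}

theorem exists_inv_three_le_lineOsc_of_le_fst
    (h₀ : m ≤ μ (Prod.fst '' {z | z ∈ I ×ˢ J ∧ u z ≤ 0}))
    (h₁ : m ≤ max (μ (Prod.fst '' {z | z ∈ I ×ˢ J ∧ 1 ≤ u z}))
      (ν (Prod.snd '' {z | z ∈ I ×ˢ J ∧ 1 ≤ u z})))
    (hmJ : m ≤ ν J) :
    (∃ E, m ≤ μ E ∧ ∀ x ∈ E, 3⁻¹ ≤ lineOsc u J x) ∨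
      ∃ F, m ≤ ν F ∧ ∀ y ∈ F, 3⁻¹ ≤ lineOsc (u ∘ Prod.swap) I y := by
  rcases le_max_iff.1 h₁ with h₁ | h₁
  · rcases inv_three_le_lineOsc_trichotomy (u := u) (I := I) (J := J) with h | h | h
    exacts [.inl ⟨_, h₀, h⟩, .inr ⟨J, hmJ, h⟩, .inl ⟨_, h₁, h⟩]
  · rcases inv_three_le_lineOsc_dichotomy (u := u) (I := I) (J := J) with h | h
    exacts [.inl ⟨_, h₀, h⟩, .inr ⟨_, h₁, h⟩]

theorem exists_inv_three_le_lineOsc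
    (h₀ : m ≤ max (μ (Prod.fst '' {z | z ∈ I ×ˢ J ∧ u z ≤ 0}))
      (ν (Prod.snd '' {z | z ∈ I ×ˢ J ∧ u z ≤ 0})))
    (h₁ : m ≤ max (μ (Prod.fst '' {z | z ∈ I ×ˢ J ∧ 1 ≤ u z}))
      (ν (Prod.snd '' {z | z ∈ I ×ˢ J ∧ 1 ≤ u z})))
    (hmI : m ≤ μ I) (hmJ : m ≤ ν J) :
    (∃ E, m ≤ μ E ∧ ∀ x ∈ E, 3⁻¹ ≤ lineOsc u J x) ∨
      ∃ F, m ≤ ν F ∧ ∀ y ∈ F, 3⁻¹ ≤ lineOsc (u ∘ Prod.swap) I y := by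
  rcases le_max_iff.1 h₀ with h₀ | h₀
  · exact exists_inv_three_le_lineOsc_of_le_fst h₀ h₁ hmJ
  · rw [← image_fst_swap_eq_image_snd (u := u) (· ≤ 0)] at h₀
    rw [← image_fst_swap_eq_image_snd (u := u) (1 ≤ ·),
      ← image_snd_swap_eq_image_fst (u := u) (1 ≤ ·), max_comm] at h₁
    exact (exists_inv_three_le_lineOsc_of_le_fst h₀ h₁ hmI).symm

end Crossing

section Energy

variable {α β : Type*} [MeasurableSpace α] [MeasurableSpace β] {μ : Measure α} {ν : Measure β}
  [SFinite μ] [SFinite ν] {u : α × β → ℝ} {I : Set α} {J : Set β} {G : α × β → ℝ≥0∞}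
  {p : ℝ} {m L : ℝ≥0∞}

theorem inv_three_rpow_mul_le_lintegral_rpow (hp : 1 ≤ p) (hμ : μ univ = L) (hν : ν univ = L)
    (hG : AEMeasurable G (μ.prod ν))
    (hV : ∀ᵐ x ∂μ, lineOsc u J x ≤ ∫⁻ y, G (x, y) ∂ν)
    (hH : ∀ᵐ y ∂ν, lineOsc (u ∘ Prod.swap) I y ≤ ∫⁻ x, G (x, y) ∂μ)
    (h₀ : m ≤ max (μ (Prod.fst '' {z | z ∈ I ×ˢ J ∧ u z ≤ 0}))
      (ν (Prod.snd '' {z | z ∈ I ×ˢ J ∧ u z ≤ 0})))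
    (h₁ : m ≤ max (μ (Prod.fst '' {z | z ∈ I ×ˢ J ∧ 1 ≤ u z}))
      (ν (Prod.snd '' {z | z ∈ I ×ˢ J ∧ 1 ≤ u z})))
    (hmI : m ≤ μ I) (hmJ : m ≤ ν J) :
    3⁻¹ ^ p * m ≤ L ^ (p - 1) * ∫⁻ z, G z ^ p ∂(μ.prod ν) := by
  rcases exists_inv_three_le_lineOsc h₀ h₁ hmI hmJ with ⟨E, hmE, hE⟩ | ⟨F, hmF, hF⟩
  · calc 3⁻¹ ^ p * m ≤ 3⁻¹ ^ p * μ E := by gcongr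
      _ ≤ L ^ (p - 1) * ∫⁻ z, G z ^ p ∂(μ.prod ν) := hν ▸
          rpow_mul_measure_le_lintegral_rpow_prod_right hp hG
            (by filter_upwards [hV] with x hx hxE using (hE x hxE).trans hx)
  · calc 3⁻¹ ^ p * m ≤ 3⁻¹ ^ p * ν F := by gcongr
      _ ≤ L ^ (p - 1) * ∫⁻ z, G z ^ p ∂(μ.prod ν) := hμ ▸
          rpow_mul_measure_le_lintegral_rpow_prod_left hp hG
            (by filter_upwards [hH] with y hy hyF using (hF y hyF).trans hy)

end Energy

theorem ofReal_mul_rpow_two_sub_le {c l p : ℝ} {X : ℝ≥0∞} (hl : 0 < l)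
    (h : ENNReal.ofReal (c * l) ≤ ENNReal.ofReal l ^ (p - 1) * X) :
    ENNReal.ofReal (c * l ^ (2 - p)) ≤ X := by
  have hK : ENNReal.ofReal l ^ (p - 1) ≠ 0 := by positivity
  refine (ENNReal.mul_le_mul_iff_right hK (by finiteness)).1 (le_of_eq_of_le ?_ h)
  rw [ENNReal.ofReal_rpow_of_pos hl, ← ENNReal.ofReal_mul (by positivity), mul_left_comm,
    ← Real.rpow_add hl]
  norm_num

theorem le_max_restrict_of_le_max_hausdorffMeasure {I J : Set ℝ} {A : Set (ℝ × ℝ)}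
    (hA : A ⊆ I ×ˢ J) {m : ℝ≥0∞} (h : m ≤ max (μH[1] (Prod.fst '' A)) (μH[1] (Prod.snd '' A))) :
    m ≤ max (volume.restrict I (Prod.fst '' A)) (volume.restrict J (Prod.snd '' A)) := by
  rwa [Measure.restrict_eq_self _ ((image_mono hA).trans (fst_image_prod_subset _ _)),
    Measure.restrict_eq_self _ ((image_mono hA).trans (snd_image_prod_subset _ _)),
    ← hausdorffMeasure_real]

theorem inv_three_rpow_mul_le_setLIntegral_square {p a₁ a₂ l : ℝ} {m : ℝ≥0∞}
    {u : ℝ × ℝ → ℝ} {g : ℝ × ℝ → ℝ × ℝ} (hp : 1 ≤ p) (hml : m ≤ ENNReal.ofReal l)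
    (hg : AEMeasurable (fun x => ‖g x‖ₑ) (volume.restrict (Icc a₁ (a₁ + l) ×ˢ Icc a₂ (a₂ + l))))
    (hu₁ : ∀ᵐ x₂ ∂(volume.restrict (Icc a₂ (a₂ + l))), ∀ s ∈ Icc a₁ (a₁ + l),
      ∀ t ∈ Icc a₁ (a₁ + l), u (t, x₂) - u (s, x₂) = ∫ r in s..t, (g (r, x₂)).1)
    (hu₂ : ∀ᵐ x₁ ∂(volume.restrict (Icc a₁ (a₁ + l))), ∀ s ∈ Icc a₂ (a₂ + l),
      ∀ t ∈ Icc a₂ (a₂ + l), u (x₁, t) - u (x₁, s) = ∫ r in s..t, (g (x₁, r)).2)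
    (h₀ : m ≤ max (μH[1] (Prod.fst '' {x | x ∈ Icc a₁ (a₁ + l) ×ˢ Icc a₂ (a₂ + l) ∧ u x ≤ 0}))
      (μH[1] (Prod.snd '' {x | x ∈ Icc a₁ (a₁ + l) ×ˢ Icc a₂ (a₂ + l) ∧ u x ≤ 0})))
    (h₁ : m ≤ max (μH[1] (Prod.fst '' {x | x ∈ Icc a₁ (a₁ + l) ×ˢ Icc a₂ (a₂ + l) ∧ 1 ≤ u x}))
      (μH[1] (Prod.snd '' {x | x ∈ Icc a₁ (a₁ + l) ×ˢ Icc a₂ (a₂ + l) ∧ 1 ≤ u x}))) :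
    3⁻¹ ^ p * m ≤
      ENNReal.ofReal l ^ (p - 1) * ∫⁻ x in Icc a₁ (a₁ + l) ×ˢ Icc a₂ (a₂ + l), ‖g x‖ₑ ^ p := by
  have hvol : ∀ a : ℝ, volume (Icc a (a + l)) = ENNReal.ofReal l := fun a => by
    rw [Real.volume_Icc, add_sub_cancel_left]
  have hprod : (volume.restrict (Icc a₁ (a₁ + l))).prod (volume.restrict (Icc a₂ (a₂ + l))) =
      volume.restrict (Icc a₁ (a₁ + l) ×ˢ Icc a₂ (a₂ + l)) := by
    rw [Measure.prod_restrict, ← Measure.volume_eq_prod]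
  have hV : ∀ᵐ x ∂(volume.restrict (Icc a₁ (a₁ + l))),
      lineOsc u (Icc a₂ (a₂ + l)) x ≤ ∫⁻ y in Icc a₂ (a₂ + l), ‖g (x, y)‖ₑ := by
    filter_upwards [hu₂] with x hx
    exact (ediam_image_le_lintegral_enorm hx).trans
      (lintegral_mono fun y => enorm_le_iff_norm_le.2 (norm_snd_le _))
  have hH : ∀ᵐ y ∂(volume.restrict (Icc a₂ (a₂ + l))),
      lineOsc (u ∘ Prod.swap) (Icc a₁ (a₁ + l)) y ≤ ∫⁻ x in Icc a₁ (a₁ + l), ‖g (x, y)‖ₑ := by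
    filter_upwards [hu₁] with y hy
    exact (ediam_image_le_lintegral_enorm hy).trans
      (lintegral_mono fun x => enorm_le_iff_norm_le.2 (norm_fst_le _))
  rw [← hprod]
  exact inv_three_rpow_mul_le_lintegral_rpow hp (by simp [hvol]) (by simp [hvol])
    (hprod ▸ hg) hV hH (le_max_restrict_of_le_max_hausdorffMeasure (fun z hz => hz.1) h₀)
    (le_max_restrict_of_le_max_hausdorffMeasure (fun z hz => hz.1) h₁)
    (by simpa [hvol] using hml) (by simpa [hvol] using hml)

theorem stmt1_general (p δ : ℝ) (hp1 : 1 ≤ p) (hδ : 0 < δ) :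
    ∃ C : ℝ, 0 < C ∧
      ∀ (a₁ a₂ l : ℝ) (u : ℝ × ℝ → ℝ) (g : ℝ × ℝ → ℝ × ℝ), 0 < l →
        IntegrableOn u (Set.Icc a₁ (a₁ + l) ×ˢ Set.Icc a₂ (a₂ + l)) volume →
        IntegrableOn (fun x => ‖g x‖) (Set.Icc a₁ (a₁ + l) ×ˢ Set.Icc a₂ (a₂ + l)) volume →
        (∀ᵐ x₂ ∂(volume.restrict (Set.Icc a₂ (a₂ + l))),
          ∀ s ∈ Set.Icc a₁ (a₁ + l), ∀ t ∈ Set.Icc a₁ (a₁ + l),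
            u (t, x₂) - u (s, x₂) = ∫ r in s..t, (g (r, x₂)).1) →
        (∀ᵐ x₁ ∂(volume.restrict (Set.Icc a₁ (a₁ + l))),
          ∀ s ∈ Set.Icc a₂ (a₂ + l), ∀ t ∈ Set.Icc a₂ (a₂ + l),
            u (x₁, t) - u (x₁, s) = ∫ r in s..t, (g (x₁, r)).2) →
        ENNReal.ofReal (δ * l) ≤
          max (μH[1] (Prod.fst '' {x | x ∈ Set.Icc a₁ (a₁ + l) ×ˢ Set.Icc a₂ (a₂ + l) ∧ u x ≤ 0}))
              (μH[1] (Prod.snd '' {x | x ∈ Set.Icc a₁ (a₁ + l) ×ˢ Set.Icc a₂ (a₂ + l) ∧ u x ≤ 0})) →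
        ENNReal.ofReal (δ * l) ≤
          max (μH[1] (Prod.fst '' {x | x ∈ Set.Icc a₁ (a₁ + l) ×ˢ Set.Icc a₂ (a₂ + l) ∧ 1 ≤ u x}))
              (μH[1] (Prod.snd '' {x | x ∈ Set.Icc a₁ (a₁ + l) ×ˢ Set.Icc a₂ (a₂ + l) ∧ 1 ≤ u x})) →
        ENNReal.ofReal (C * l ^ (2 - p)) ≤
          ∫⁻ x in Set.Icc a₁ (a₁ + l) ×ˢ Set.Icc a₂ (a₂ + l), ENNReal.ofReal (‖g x‖ ^ p) := by
  refine ⟨3⁻¹ ^ p * min δ 1, by positivity, ?_⟩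
  intro a₁ a₂ l u g hl _ hg hu₁ hu₂ h₀ h₁
  have hm : ENNReal.ofReal (min δ 1 * l) ≤ ENNReal.ofReal (δ * l) := by
    gcongr; exact min_le_left _ _
  have hml : ENNReal.ofReal (min δ 1 * l) ≤ ENNReal.ofReal l := by
    gcongr; exact (mul_le_iff_le_one_left hl).2 (min_le_right _ _)
  have key := inv_three_rpow_mul_le_setLIntegral_square hp1 hml
    (by simpa using hg.aestronglyMeasurable.enorm) hu₁ hu₂ (hm.trans h₀) (hm.trans h₁)
  refine ofReal_mul_rpow_two_sub_le hl ?_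
  rw [mul_assoc, ENNReal.ofReal_mul (by positivity), ← ENNReal.ofReal_rpow_of_pos (by norm_num),
    ENNReal.ofReal_inv_of_pos (by norm_num), ENNReal.ofReal_ofNat]
  refine key.trans_eq (congrArg _ (lintegral_congr fun z => ?_))
  rw [← ofReal_norm, ENNReal.ofReal_rpow_of_nonneg (norm_nonneg _) (by linarith)]

/-- Lower bound for the `p`-energy of a Sobolev function on a square whose
level sets `{u ≤ 0}` and `{u ≥ 1}` both have large projections onto a coordinate axis. -/
theorem stmt1 (p δ : ℝ) (hp1 : 1 ≤ p) (hp2 : p < 2) (hδ : 0 < δ) :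
    ∃ C : ℝ, 0 < C ∧
      ∀ (a₁ a₂ l : ℝ) (u : ℝ × ℝ → ℝ) (g : ℝ × ℝ → ℝ × ℝ), 0 < l →
        IntegrableOn u (Set.Icc a₁ (a₁ + l) ×ˢ Set.Icc a₂ (a₂ + l)) volume →
        IntegrableOn (fun x => ‖g x‖) (Set.Icc a₁ (a₁ + l) ×ˢ Set.Icc a₂ (a₂ + l)) volume →
        (∀ᵐ x₂ ∂(volume.restrict (Set.Icc a₂ (a₂ + l))),
          ∀ s ∈ Set.Icc a₁ (a₁ + l), ∀ t ∈ Set.Icc a₁ (a₁ + l),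
            u (t, x₂) - u (s, x₂) = ∫ r in s..t, (g (r, x₂)).1) →
        (∀ᵐ x₁ ∂(volume.restrict (Set.Icc a₁ (a₁ + l))),
          ∀ s ∈ Set.Icc a₂ (a₂ + l), ∀ t ∈ Set.Icc a₂ (a₂ + l),
            u (x₁, t) - u (x₁, s) = ∫ r in s..t, (g (x₁, r)).2) →
        ENNReal.ofReal (δ * l) ≤
          max (μH[1] (Prod.fst '' {x | x ∈ Set.Icc a₁ (a₁ + l) ×ˢ Set.Icc a₂ (a₂ + l) ∧ u x ≤ 0}))
              (μH[1] (Prod.snd '' {x | x ∈ Set.Icc a₁ (a₁ + l) ×ˢ Set.Icc a₂ (a₂ + l) ∧ u x ≤ 0})) →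
        ENNReal.ofReal (δ * l) ≤
          max (μH[1] (Prod.fst '' {x | x ∈ Set.Icc a₁ (a₁ + l) ×ˢ Set.Icc a₂ (a₂ + l) ∧ 1 ≤ u x}))
              (μH[1] (Prod.snd '' {x | x ∈ Set.Icc a₁ (a₁ + l) ×ˢ Set.Icc a₂ (a₂ + l) ∧ 1 ≤ u x})) →
        ENNReal.ofReal (C * l ^ (2 - p)) ≤
          ∫⁻ x in Set.Icc a₁ (a₁ + l) ×ˢ Set.Icc a₂ (a₂ + l), ENNReal.ofReal (‖g x‖ ^ p) :=
  stmt1_general p δ hp1 hδ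
end

section
/- Let Ω ⊂ ℝ² be a bounded simply connected domain and 1 < p < 2. Suppose that for every pair z₁, z₂ ∈ ℝ² \ Ω there exists a curve γ_n ⊂ ℝ² \ Ω_n (for each n in a sequence of open sets Ω_n ⊂ Ω with ∩_n (ℝ²\Ω_n) = ℝ²\Ω and Ω_n → Ω) joining z₁ and z₂ with ∫_{γ_n} dist(z, ∂Ω_n)^{1-p} ds(z) ≤ C|z₁−z₂|^{2-p} and ℓ(γ_n) ≤ M uniformly. Then there exists a 1-Lipschitz curve γ : [0, M] → ℝ² \ Ω joining z₁ and z₂ such that ∫_γ dist(z, ∂Ω)^{1-p} ds(z) ≤ C|z₁−z₂|^{2-p}. -/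
/-!
Extending each `γₙ` by the constant `z₂` makes all curves 1-Lipschitz on `[0, M]`, so by
Arzelà–Ascoli a subsequence converges pointwise to a 1-Lipschitz curve `γ`; since the `Ωₙ` are
open and increase to `Ω`, the limit avoids `Ω`. Along a further subsequence the lengths `Lₙ`
converge to some `L₀`: beyond `L₀` the curve `γ` is constant, so `γ' = 0`, while before `L₀` the
weights `dist(γₙ(t), ∂Ωₙ)^(1-p)` tend to `dist(γ(t), ∂Ω)^(1-p)` because `∂Ωₙ → ∂Ω` in Hausdorff
distance. As `|γ'| ≤ 1`, Fatou's lemma transfers the weighted bound to `γ`.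
-/

open Metric MeasureTheory Set Filter Topology BoundedContinuousFunction
open scoped NNReal ENNReal

section Lipschitz

variable {E : Type*} [PseudoMetricSpace E] {f : ℝ → E} {K : ℝ≥0} {a b c : ℝ}

theorem LipschitzOnWith.Icc_union_Icc (hab : LipschitzOnWith K f (Icc a b))
    (hbc : LipschitzOnWith K f (Icc b c)) : LipschitzOnWith K f (Icc a c) := by
  have key : ∀ x ∈ Icc a c, ∀ y ∈ Icc a c, x ≤ y → dist (f x) (f y) ≤ K * (y - x) := by
    intro x hx y hy hxy
    rcases le_total y b with hyb | hby
    · simpa [Real.dist_eq, abs_of_nonpos (sub_nonpos.2 hxy)] using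
        hab.dist_le_mul x ⟨hx.1, hxy.trans hyb⟩ y ⟨hx.1.trans hxy, hyb⟩
    rcases le_total b x with hbx | hxb
    · simpa [Real.dist_eq, abs_of_nonpos (sub_nonpos.2 hxy)] using
        hbc.dist_le_mul x ⟨hbx, hxy.trans hy.2⟩ y ⟨hbx.trans hxy, hy.2⟩
    have h₁ := hab.dist_le_mul x ⟨hx.1, hxb⟩ b ⟨hx.1.trans hxb, le_rfl⟩
    have h₂ := hbc.dist_le_mul b ⟨le_rfl, hby.trans hy.2⟩ y ⟨hby, hy.2⟩
    rw [Real.dist_eq, abs_of_nonpos (sub_nonpos.2 hxb)] at h₁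
    rw [Real.dist_eq, abs_of_nonpos (sub_nonpos.2 hby)] at h₂
    calc dist (f x) (f y) ≤ dist (f x) (f b) + dist (f b) (f y) := dist_triangle _ _ _
      _ ≤ K * (y - x) := by linarith
  refine LipschitzOnWith.of_dist_le_mul fun x hx y hy => ?_
  rcases le_total x y with hxy | hyx
  · simpa [Real.dist_eq, abs_of_nonpos (sub_nonpos.2 hxy)] using key x hx y hy hxy
  · simpa [dist_comm, Real.dist_eq, abs_of_nonneg (sub_nonneg.2 hyx)] using key y hy x hx hyx

theorem LipschitzOnWith.Icc_of_forall_ge_eq (hf : LipschitzOnWith K f (Icc a b)) {z : E}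
    (hz : ∀ t, b ≤ t → f t = z) : LipschitzOnWith K f (Icc a c) :=
  hf.Icc_union_Icc <| LipschitzOnWith.of_dist_le_mul fun x hx y hy => by
    rw [hz x hx.1, hz y hy.1, dist_self]
    positivity

end Lipschitz

theorem exists_subseq_tendsto_of_lipschitzOnWith {E : Type*} [MetricSpace E] [ProperSpace E]
    {a b : ℝ} (hab : a ≤ b) {K : ℝ≥0} {f : ℕ → ℝ → E} {x₀ : E}
    (hf : ∀ n, LipschitzOnWith K (f n) (Icc a b)) (ha : ∀ n, f n a = x₀) :
    ∃ g : ℝ → E, ∃ φ : ℕ → ℕ, StrictMono φ ∧ LipschitzWith K g ∧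
      ∀ t ∈ Icc a b, Tendsto (fun k => f (φ k) t) atTop (𝓝 (g t)) := by
  let F : ℕ → (Icc a b →ᵇ E) := fun n =>
    mkOfCompact ⟨(Icc a b).domRestrict (f n), (hf n).to_restrict.continuous⟩
  have hFlip : ∀ n, LipschitzWith K (F n) := fun n => (hf n).to_restrict
  have hmem : ∀ n (t : Icc a b), F n t ∈ closedBall x₀ (K * (b - a)) := fun n t => by
    have hdist : dist (t : ℝ) a ≤ b - a := by
      rw [Real.dist_eq, abs_of_nonneg (sub_nonneg.2 t.2.1)]
      linarith [t.2.2]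
    rw [mem_closedBall, ← ha n]
    exact ((hf n).dist_le_mul t t.2 a (left_mem_Icc.2 hab)).trans
      (mul_le_mul_of_nonneg_left hdist K.2)
  have hcomp : IsCompact (closure (range F)) := by
    refine arzela_ascoli _ (isCompact_closedBall x₀ (K * (b - a))) (range F) ?_ ?_
    · rintro _ t ⟨n, rfl⟩
      exact hmem n t
    · exact (LipschitzWith.uniformEquicontinuous _ K fun ⟨_, n, hn⟩ => hn ▸ hFlip n).equicontinuous
  obtain ⟨F₀, hF₀, φ, hφ, hlim⟩ := hcomp.tendsto_subseq (x := F) fun n => subset_closure ⟨n, rfl⟩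
  have hclosed : IsClosed {G : Icc a b →ᵇ E | LipschitzWith K G} :=
    IsClosed.preimage (f := fun (G : Icc a b →ᵇ E) t => G t) continuous_coe
      (isClosed_setOfPred_lipschitzWith K)
  have hF₀lip : LipschitzWith K F₀ := closure_minimal (range_subset_iff.2 hFlip) hclosed hF₀
  refine ⟨F₀ ∘ projIcc a b hab, φ, hφ, by
    simpa only [mul_one] using hF₀lip.comp (LipschitzWith.projIcc hab), fun t ht => ?_⟩
  simp only [Function.comp_apply, projIcc_of_mem hab ht]
  exact ((continuous_coe.tendsto F₀).comp hlim).apply_nhds ⟨t, ht⟩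

theorem tendsto_infDist_of_tendsto_hausdorffDist {α ι : Type*} [PseudoMetricSpace α]
    {l : Filter ι} {x : ι → α} {y : α} {s : ι → Set α} {t : Set α}
    (hx : Tendsto x l (𝓝 y)) (hfin : ∀ᶠ i in l, hausdorffEDist (s i) t ≠ ⊤)
    (hs : Tendsto (fun i => hausdorffDist (s i) t) l (𝓝 0)) :
    Tendsto (fun i => infDist (x i) (s i)) l (𝓝 (infDist y t)) := by
  have hxt : Tendsto (fun i => infDist (x i) t) l (𝓝 (infDist y t)) :=
    ((continuous_infDist_pt t).tendsto y).comp hx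
  refine tendsto_of_tendsto_of_tendsto_of_le_of_le' (by simpa using hxt.sub hs)
    (by simpa using hxt.add hs) ?_ ?_
  · filter_upwards [hfin] with i hi
    linarith [infDist_le_infDist_add_hausdorffDist (x := x i) hi]
  · filter_upwards [hfin] with i hi
    have := infDist_le_infDist_add_hausdorffDist (x := x i) (by rwa [hausdorffEDist_comm])
    linarith [hausdorffDist_comm (s := s i) (t := t)]

section Frontier

variable {E : Type*} [NormedAddCommGroup E] [NormedSpace ℝ E] [Nontrivial E]

theorem Bornology.IsBounded.nonempty_frontier {s : Set E} (hb : Bornology.IsBounded s)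
    (hs : s.Nonempty) : (frontier s).Nonempty :=
  nonempty_frontier_iff.2 ⟨hs, fun h => NormedSpace.unbounded_univ ℝ E (h ▸ hb)⟩

theorem hausdorffEDist_frontier_ne_top {s t : Set E} (hs : Bornology.IsBounded s)
    (ht : Bornology.IsBounded t) (hs' : s.Nonempty) (ht' : t.Nonempty) :
    hausdorffEDist (frontier s) (frontier t) ≠ ⊤ :=
  hausdorffEDist_ne_top_of_nonempty_of_bounded (hs.nonempty_frontier hs')
    (ht.nonempty_frontier ht') (hs.closure.subset frontier_subset_closure)
    (ht.closure.subset frontier_subset_closure)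

end Frontier

theorem notMem_iUnion_of_tendsto {X : Type*} [TopologicalSpace X] {U : ℕ → Set X}
    (hU : Monotone U) (hopen : ∀ n, IsOpen (U n)) {σ : ℕ → ℕ} (hσ : Tendsto σ atTop atTop)
    {x : ℕ → X} {y : X} (hx : Tendsto x atTop (𝓝 y)) (hxU : ∀ n, x n ∉ U (σ n)) :
    y ∉ ⋃ n, U n := by
  rintro ⟨_, ⟨m, rfl⟩, hm⟩
  obtain ⟨n, hxn, hmn⟩ :=
    ((hx.eventually ((hopen m).mem_nhds hm)).and (hσ.eventually_ge_atTop m)).exists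
  exact hxU n (hU hmn hxn)

theorem ENNReal.ofReal_rpow_le_liminf {ι : Type*} {l : Filter ι} [l.NeBot] {d : ι → ℝ}
    {d₀ r : ℝ} (hr : r ≠ 0) (hd : Tendsto d l (𝓝 d₀)) :
    ENNReal.ofReal (d₀ ^ r) ≤ liminf (fun i => ENNReal.ofReal (d i ^ r)) l := by
  -- `x ↦ x ^ r` is discontinuous at `0` for `r < 0`, but there `0 ^ r = 0` makes the bound trivial.
  rcases eq_or_ne d₀ 0 with rfl | hd₀
  · simp [Real.zero_rpow hr]
  refine (Tendsto.liminf_eq ?_).ge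
  exact (ENNReal.continuous_ofReal.tendsto _).comp
    ((Real.continuousAt_rpow_const _ _ (Or.inl hd₀)).tendsto.comp hd)

theorem MeasureTheory.lintegral_le_of_ae_le_liminf {α : Type*} [MeasurableSpace α]
    {μ : Measure α} {F : α → ℝ≥0∞} {f : ℕ → α → ℝ≥0∞} {c : ℝ≥0∞}
    (hf : ∀ n, AEMeasurable (f n) μ) (hF : ∀ᵐ x ∂μ, F x ≤ liminf (fun n => f n x) atTop)
    (hc : ∀ n, ∫⁻ x, f n x ∂μ ≤ c) : ∫⁻ x, F x ∂μ ≤ c :=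
  calc ∫⁻ x, F x ∂μ ≤ ∫⁻ x, liminf (fun n => f n x) atTop ∂μ := lintegral_mono_ae hF
    _ ≤ liminf (fun n => ∫⁻ x, f n x ∂μ) atTop := lintegral_liminf_le' hf
    _ ≤ c := liminf_le_of_le (by isBoundedDefault) fun _ hb =>
      hb.exists.elim fun n hn => hn.trans (hc n)

section WeightedLength

variable {E : Type*} [NormedAddCommGroup E] [NormedSpace ℝ E] {r M L₀ : ℝ} {z : E} {s : Set E}
  {ss : ℕ → Set E} {L : ℕ → ℝ} {γ : ℝ → E} {γs : ℕ → ℝ → E}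

theorem ofReal_rpow_infDist_mul_norm_deriv_le_liminf (hr : r ≠ 0) (hγ : LipschitzWith 1 γ)
    (hend : ∀ n t, L n ≤ t → γs n t = z) (hL : Tendsto L atTop (𝓝 L₀))
    (hlim : ∀ t ∈ Icc 0 M, Tendsto (fun n => γs n t) atTop (𝓝 (γ t)))
    (hfin : ∀ᶠ n in atTop, hausdorffEDist (ss n) s ≠ ⊤)
    (hdist : Tendsto (fun n => hausdorffDist (ss n) s) atTop (𝓝 0))
    {t : ℝ} (ht : t ∈ Ioo 0 M) (htL : t ≠ L₀) :
    ENNReal.ofReal (infDist (γ t) s ^ r * ‖deriv γ t‖) ≤ liminf (fun n =>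
      (Ioc 0 (L n)).indicator (fun t => ENNReal.ofReal (infDist (γs n t) (ss n) ^ r)) t) atTop := by
  rcases htL.lt_or_gt with hlt | hgt
  · have hind : ∀ᶠ n in atTop, (Ioc 0 (L n)).indicator
        (fun t => ENNReal.ofReal (infDist (γs n t) (ss n) ^ r)) t =
          ENNReal.ofReal (infDist (γs n t) (ss n) ^ r) := by
      filter_upwards [hL.eventually (Ioi_mem_nhds hlt)] with n hn
      exact indicator_of_mem (show t ∈ Ioc 0 (L n) from ⟨ht.1, hn.le⟩) _
    rw [liminf_congr hind]
    refine (ENNReal.ofReal_le_ofReal ?_).trans (ENNReal.ofReal_rpow_le_liminf hr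
      (tendsto_infDist_of_tendsto_hausdorffDist (hlim t (Ioo_subset_Icc_self ht)) hfin hdist))
    exact mul_le_of_le_one_right (Real.rpow_nonneg infDist_nonneg _)
      (by simpa using norm_deriv_le_of_lipschitz hγ)
  · have hconst : ∀ u ∈ Ioo (max L₀ 0) M, γ u = z := fun u hu =>
      tendsto_nhds_unique (hlim u ⟨(le_max_right _ _).trans hu.1.le, hu.2.le⟩) <|
        tendsto_const_nhds.congr' <| by
          filter_upwards [hL.eventually (Iio_mem_nhds ((le_max_left _ _).trans_lt hu.1))]
            with n hn
          exact (hend n u hn.le).symm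
    have hderiv : deriv γ t = 0 := by
      rw [Filter.EventuallyEq.deriv_eq (f := fun _ => z)
        (eventually_of_mem (Ioo_mem_nhds (max_lt hgt ht.1) ht.2) hconst), deriv_const]
    simp [hderiv]

theorem lintegral_ofReal_rpow_infDist_mul_norm_deriv_le (hr : r ≠ 0) (hγ : LipschitzWith 1 γ)
    (hγs : ∀ n, ContinuousOn (γs n) (Icc 0 M)) (hLM : ∀ n, L n ≤ M)
    (hend : ∀ n t, L n ≤ t → γs n t = z) (hL : Tendsto L atTop (𝓝 L₀))
    (hlim : ∀ t ∈ Icc 0 M, Tendsto (fun n => γs n t) atTop (𝓝 (γ t)))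
    (hfin : ∀ᶠ n in atTop, hausdorffEDist (ss n) s ≠ ⊤)
    (hdist : Tendsto (fun n => hausdorffDist (ss n) s) atTop (𝓝 0)) {c : ℝ≥0∞}
    (hint : ∀ n, ∫⁻ t in Ioc 0 (L n), ENNReal.ofReal (infDist (γs n t) (ss n) ^ r) ≤ c) :
    ∫⁻ t in Ioc 0 M, ENNReal.ofReal (infDist (γ t) s ^ r * ‖deriv γ t‖) ≤ c := by
  refine lintegral_le_of_ae_le_liminf (f := fun n => (Ioc 0 (L n)).indicator
    fun t => ENNReal.ofReal (infDist (γs n t) (ss n) ^ r))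
    (fun n => AEMeasurable.indicator ?_ measurableSet_Ioc) ?_ fun n => ?_
  · exact ENNReal.measurable_ofReal.comp_aemeasurable ((measurable_id.pow_const r).comp_aemeasurable
      (((continuous_infDist_pt _).comp_continuousOn
        ((hγs n).mono Ioc_subset_Icc_self)).aemeasurable measurableSet_Ioc))
  · have hnull : ∀ᵐ t ∂volume.restrict (Ioc 0 M), t ∉ ({L₀, M} : Set ℝ) :=
      ae_restrict_of_ae ((toFinite _).countable.ae_notMem _)
    filter_upwards [hnull, ae_restrict_mem measurableSet_Ioc] with t htLM ht
    obtain ⟨htL, htM⟩ : t ≠ L₀ ∧ t ≠ M := by simpa [not_or] using htLM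
    exact ofReal_rpow_infDist_mul_norm_deriv_le_liminf hr hγ hend hL hlim hfin hdist
      ⟨ht.1, ht.2.lt_of_ne htM⟩ htL
  · rw [lintegral_indicator measurableSet_Ioc, Measure.restrict_restrict measurableSet_Ioc,
      inter_eq_left.2 (Ioc_subset_Ioc_right (hLM n))]
    exact hint n

end WeightedLength

theorem stmt7_general (p C M : ℝ) (hp1 : 1 < p) (hM : 0 < M)
    (Ω : Set ℂ) (hΩc : IsConnected Ω) (hΩb : Bornology.IsBounded Ω)
    (z₁ z₂ : ℂ) (hz₂ : z₂ ∉ Ω)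
    (Ωs : ℕ → Set ℂ) (hopen : ∀ n, IsOpen (Ωs n)) (hsub : ∀ n, Ωs n ⊆ Ω)
    (hmono : Monotone Ωs)
    (hinter : (⋂ n, (Ωs n)ᶜ) = Ωᶜ)
    (hconv : Tendsto (fun n => Metric.hausdorffDist (frontier (Ωs n)) (frontier Ω))
      atTop (nhds 0))
    (L : ℕ → ℝ) (γs : ℕ → ℝ → ℂ)
    (hL0 : ∀ n, 0 ≤ L n) (hLM : ∀ n, L n ≤ M)
    (hstart : ∀ n, γs n 0 = z₁)
    (hend : ∀ n, ∀ t : ℝ, L n ≤ t → γs n t = z₂)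
    (hlip : ∀ n, LipschitzOnWith 1 (γs n) (Set.Icc 0 (L n)))
    (havoid : ∀ n, ∀ t ∈ Set.Icc (0:ℝ) (L n), γs n t ∉ Ωs n)
    (hint : ∀ n,
      (∫⁻ t in Set.Ioc (0:ℝ) (L n),
        ENNReal.ofReal ((Metric.infDist (γs n t) (frontier (Ωs n))) ^ (1 - p)))
      ≤ ENNReal.ofReal (C * dist z₁ z₂ ^ (2 - p))) :
    ∃ γ : ℝ → ℂ, LipschitzOnWith 1 γ (Set.Icc 0 M) ∧ γ 0 = z₁ ∧ γ M = z₂ ∧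
      (∀ t ∈ Set.Icc (0:ℝ) M, γ t ∉ Ω) ∧
      (∫⁻ t in Set.Ioc (0:ℝ) M,
        ENNReal.ofReal ((Metric.infDist (γ t) (frontier Ω)) ^ (1 - p) * ‖deriv γ t‖))
      ≤ ENNReal.ofReal (C * dist z₁ z₂ ^ (2 - p)) := by
  have hM0 : 0 ≤ M := hM.le
  have hlipM : ∀ n, LipschitzOnWith 1 (γs n) (Icc 0 M) := fun n =>
    (hlip n).Icc_of_forall_ge_eq (hend n)
  have havoidM : ∀ n, ∀ t ∈ Icc 0 M, γs n t ∉ Ωs n := fun n t ht => by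
    rcases le_total t (L n) with htL | hLt
    · exact havoid n t ⟨ht.1, htL⟩
    · exact hend n t hLt ▸ fun h => hz₂ (hsub n h)
  have hΩ : ⋃ n, Ωs n = Ω := compl_injective (by rw [compl_iUnion, hinter])
  obtain ⟨N, hN⟩ : ∃ N, (Ωs N).Nonempty := by
    obtain ⟨x, hx⟩ := hΩc.nonempty
    rw [← hΩ, mem_iUnion] at hx
    exact hx.imp fun N hN => ⟨x, hN⟩
  obtain ⟨L₀, -, ψ, hψ, hLψ⟩ := isCompact_Icc.tendsto_subseq fun n => ⟨hL0 n, hLM n⟩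
  obtain ⟨γ, φ, hφ, hγ, hlim⟩ :=
    exists_subseq_tendsto_of_lipschitzOnWith hM0 (fun n => hlipM (ψ n)) fun n => hstart (ψ n)
  have hσ : Tendsto (ψ ∘ φ) atTop atTop := (hψ.comp hφ).tendsto_atTop
  refine ⟨γ, hγ.lipschitzOnWith, ?_, ?_, fun t ht => hΩ ▸ notMem_iUnion_of_tendsto hmono hopen
    hσ (hlim t ht) fun n => havoidM _ t ht, ?_⟩
  · exact tendsto_nhds_unique (hlim 0 (left_mem_Icc.2 hM0)) (by simp [hstart])
  · exact tendsto_nhds_unique (hlim M (right_mem_Icc.2 hM0)) (by simp [hend _ M (hLM _)])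
  refine lintegral_ofReal_rpow_infDist_mul_norm_deriv_le (by linarith) hγ
    (fun n => (hlipM _).continuousOn) (fun n => hLM _) (fun n => hend _) (hLψ.comp hφ.tendsto_atTop)
    hlim ?_ (hconv.comp hσ) fun n => hint _
  filter_upwards [hσ.eventually_ge_atTop N] with n hn
  exact hausdorffEDist_frontier_ne_top (hΩb.subset (hsub _)) hΩb (hN.mono (hmono hn)) hΩc.nonempty

/-- Compactness of curves satisfying the weighted distance condition for an
increasing exhaustion `Ω_n → Ω`: arc-length parametrized curves `γ_n ⊂ ℝ² \ Ω_n` of length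
at most `M` joining `z₁, z₂` with uniform weighted integral bounds have a 1-Lipschitz limit
curve `γ : [0,M] → ℝ² \ Ω` joining `z₁, z₂` and satisfying the same bound for `Ω`. -/
theorem stmt7 (p C M : ℝ) (hp1 : 1 < p) (hp2 : p < 2) (hC : 0 < C) (hM : 0 < M)
    (Ω : Set ℂ) (hΩo : IsOpen Ω) (hΩc : IsConnected Ω) (hΩb : Bornology.IsBounded Ω)
    (hsc : SimplyConnectedSpace ↥Ω)
    (z₁ z₂ : ℂ) (hz₁ : z₁ ∉ Ω) (hz₂ : z₂ ∉ Ω)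
    (Ωs : ℕ → Set ℂ) (hopen : ∀ n, IsOpen (Ωs n)) (hsub : ∀ n, Ωs n ⊆ Ω)
    (hmono : Monotone Ωs)
    (hinter : (⋂ n, (Ωs n)ᶜ) = Ωᶜ)
    (hconv : Tendsto (fun n => Metric.hausdorffDist (frontier (Ωs n)) (frontier Ω))
      atTop (nhds 0))
    (L : ℕ → ℝ) (γs : ℕ → ℝ → ℂ)
    (hL0 : ∀ n, 0 ≤ L n) (hLM : ∀ n, L n ≤ M)
    (hstart : ∀ n, γs n 0 = z₁)
    (hend : ∀ n, ∀ t : ℝ, L n ≤ t → γs n t = z₂)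
    (hlip : ∀ n, LipschitzOnWith 1 (γs n) (Set.Icc 0 (L n)))
    (harc : ∀ n, eVariationOn (γs n) (Set.Icc 0 (L n)) = ENNReal.ofReal (L n))
    (havoid : ∀ n, ∀ t ∈ Set.Icc (0:ℝ) (L n), γs n t ∉ Ωs n)
    (hint : ∀ n,
      (∫⁻ t in Set.Ioc (0:ℝ) (L n),
        ENNReal.ofReal ((Metric.infDist (γs n t) (frontier (Ωs n))) ^ (1 - p)))
      ≤ ENNReal.ofReal (C * dist z₁ z₂ ^ (2 - p))) :
    ∃ γ : ℝ → ℂ, LipschitzOnWith 1 γ (Set.Icc 0 M) ∧ γ 0 = z₁ ∧ γ M = z₂ ∧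
      (∀ t ∈ Set.Icc (0:ℝ) M, γ t ∉ Ω) ∧
      (∫⁻ t in Set.Ioc (0:ℝ) M,
        ENNReal.ofReal ((Metric.infDist (γ t) (frontier Ω)) ^ (1 - p) * ‖deriv γ t‖))
      ≤ ENNReal.ofReal (C * dist z₁ z₂ ^ (2 - p)) :=
  stmt7_general p C M hp1 hM Ω hΩc hΩb z₁ z₂ hz₂ Ωs hopen hsub hmono hinter hconv L γs hL0 hLM
    hstart hend hlip havoid hint
end

section
/- Let Ω ⊂ ℝ² be a bounded Jordan John domain with John constant J and John center x₀, let φ : 𝔻 → Ω be a conformal map with φ(0) = x₀ that is η-quasisymmetric with respect to the inner distance of Ω. Let A ⊂ 𝔻 be a set containing a disk B(z₀, c₀·diam(A)) with c₀ ≤ 1 absolute. Then there exists c = c(J, c₀) ∈ (0,1) such that the inner metric ball B_Ω(φ(z₀), c·diam_Ω(φ(A))) is contained in φ(A). -/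
open Metric MeasureTheory Set

noncomputable section

/-- A Jordan domain: a bounded connected open set whose boundary is a Jordan curve. -/
def IsJordanDomain (Ω : Set ℂ) : Prop :=
  IsOpen Ω ∧ Bornology.IsBounded Ω ∧ IsConnected Ω ∧
    ∃ γ : AddCircle (1:ℝ) → ℂ, Continuous γ ∧ Function.Injective γ ∧
      Set.range γ = frontier Ω

/-- A `J`-John domain with distinguished point `x₀`. -/
def IsJohnDomain (J : ℝ) (Ω : Set ℂ) (x₀ : ℂ) : Prop :=
  x₀ ∈ Ω ∧ ∀ x ∈ Ω, ∃ (L : ℝ) (γ : ℝ → ℂ), 0 ≤ L ∧ γ 0 = x ∧ γ L = x₀ ∧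
    LipschitzOnWith 1 γ (Set.Icc 0 L) ∧
    ∀ t ∈ Set.Icc (0:ℝ) L, γ t ∈ Ω ∧ J * t ≤ Metric.infDist (γ t) Ωᶜ

/-- The inner distance in `Ω`. -/
def innerDist (Ω : Set ℂ) (x y : ℂ) : ℝ :=
  sInf {L : ℝ | 0 ≤ L ∧ ∃ γ : ℝ → ℂ, γ 0 = x ∧ γ L = y ∧
    (∀ t ∈ Set.Icc (0:ℝ) L, γ t ∈ Ω) ∧ LipschitzOnWith 1 γ (Set.Icc 0 L)}

/-- The inner diameter of `S` with respect to `Ω`. -/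
def innerDiam (Ω S : Set ℂ) : ℝ :=
  sSup {d : ℝ | ∃ x ∈ S, ∃ y ∈ S, d = innerDist Ω x y}

/-! If `φ w` lies in the inner ball but `w ∉ A`, then `|w - z₀| ≥ c₀ diam A`. For `a, b ∈ A`
ordered so that `|a - z₀| ≤ |b - z₀|` we have `|a - b| ≤ 2 |b - z₀|` and
`|b - z₀| ≤ |w - z₀| / c₀`, so two applications of quasisymmetry give
`dist_Ω(φ a, φ b) ≤ η(2) η(1/c₀) dist_Ω(φ z₀, φ w)`. Hence
`diam_Ω φ(A) ≤ η(2) η(1/c₀) c diam_Ω φ(A)`, which is absurd for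
`c = 1 / (η(2) η(1/c₀) + 2)`. -/

lemma LipschitzOnWith.comp_sub_left {E : Type*} [PseudoEMetricSpace E] {K : NNReal}
    {γ : ℝ → E} {L : ℝ} (h : LipschitzOnWith K γ (Icc 0 L)) :
    LipschitzOnWith K (fun t => γ (L - t)) (Icc 0 L) := by
  simpa [Function.comp_def] using
    h.comp (IsometryEquiv.subLeft L).isometry.lipschitz.lipschitzOnWith
      (fun t ht => ⟨sub_nonneg.2 ht.2, sub_le_self L ht.1⟩)

section InnerDistance

variable {Ω : Set ℂ}

lemma innerDist_nonneg (x y : ℂ) : 0 ≤ innerDist Ω x y :=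
  Real.sInf_nonneg fun _ hL => hL.1

lemma innerDist_comm (x y : ℂ) : innerDist Ω x y = innerDist Ω y x := by
  have reverse : ∀ x y : ℂ, ∀ L : ℝ, (0 ≤ L ∧ ∃ γ : ℝ → ℂ, γ 0 = x ∧ γ L = y ∧
      (∀ t ∈ Icc (0:ℝ) L, γ t ∈ Ω) ∧ LipschitzOnWith 1 γ (Icc 0 L)) →
      (0 ≤ L ∧ ∃ γ : ℝ → ℂ, γ 0 = y ∧ γ L = x ∧
      (∀ t ∈ Icc (0:ℝ) L, γ t ∈ Ω) ∧ LipschitzOnWith 1 γ (Icc 0 L)) := by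
    rintro x y L ⟨hL, γ, h0, hL', hmem, hlip⟩
    exact ⟨hL, fun t => γ (L - t), by simpa using hL', by simpa using h0,
      fun t ht => hmem _ ⟨sub_nonneg.2 ht.2, sub_le_self L ht.1⟩, hlip.comp_sub_left⟩
  unfold innerDist
  congr 1
  ext L
  exact ⟨reverse x y L, reverse y x L⟩

lemma innerDist_self {x : ℂ} (hx : x ∈ Ω) : innerDist Ω x x = 0 :=
  le_antisymm
    (csInf_le ⟨0, fun _ hL => hL.1⟩
      ⟨le_rfl, fun _ => x, rfl, rfl, fun _ _ => hx,
        ((LipschitzWith.const x).weaken zero_le_one).lipschitzOnWith⟩)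
    (innerDist_nonneg x x)

lemma innerDiam_le {S : Set ℂ} {C : ℝ} (hC : 0 ≤ C)
    (h : ∀ x ∈ S, ∀ y ∈ S, innerDist Ω x y ≤ C) : innerDiam Ω S ≤ C :=
  Real.sSup_le (by rintro _ ⟨x, hx, y, hy, rfl⟩; exact h x hx y hy) hC

lemma innerDiam_nonpos_of_subsingleton {S : Set ℂ} (hS : S.Subsingleton) (hSΩ : S ⊆ Ω) :
    innerDiam Ω S ≤ 0 :=
  innerDiam_le le_rfl fun x hx y hy => by rw [hS hx hy, innerDist_self (hSΩ hy)]

end InnerDistance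

lemma dist_le_one_div_mul_dist_of_ball_subset {X : Type*} [PseudoMetricSpace X] {A : Set X}
    {z₀ b w : X} {c₀ : ℝ} (hc₀ : 0 < c₀) (hA : Bornology.IsBounded A)
    (hball : ball z₀ (c₀ * diam A) ⊆ A) (hz₀ : z₀ ∈ A) (hb : b ∈ A) (hw : w ∉ A) :
    dist b z₀ ≤ 1 / c₀ * dist w z₀ := by
  have hwz₀ : c₀ * diam A ≤ dist w z₀ := not_lt.1 fun h => hw (hball (mem_ball.2 h))
  rw [one_div_mul_eq_div, le_div_iff₀ hc₀]
  nlinarith [dist_le_diam_of_mem hA hb hz₀]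

section Quasisymmetry

variable {X : Type*} [PseudoMetricSpace X]

def IsInnerQuasisymmetricOn (Ω : Set ℂ) (η : ℝ → ℝ) (φ : X → ℂ) (U : Set X) : Prop :=
  ∀ z x y : X, z ∈ U → x ∈ U → y ∈ U → ∀ t : ℝ, 0 ≤ t → dist z x ≤ t * dist y x →
    innerDist Ω (φ z) (φ x) ≤ η t * innerDist Ω (φ y) (φ x)

variable {Ω : Set ℂ} {η : ℝ → ℝ} {φ : X → ℂ} {U : Set X}

lemma IsInnerQuasisymmetricOn.innerDist_le_of_dist_le (hQS : IsInnerQuasisymmetricOn Ω η φ U)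
    (hη2 : 0 ≤ η 2) {a b z₀ w : X} (ha : a ∈ U) (hb : b ∈ U) (hz₀ : z₀ ∈ U) (hw : w ∈ U)
    {s : ℝ} (hs : 0 ≤ s) (hab : dist z₀ a ≤ dist z₀ b) (hbw : dist b z₀ ≤ s * dist w z₀) :
    innerDist Ω (φ a) (φ b) ≤ η 2 * η s * innerDist Ω (φ z₀) (φ w) := by
  have hab' : dist a b ≤ 2 * dist z₀ b := by
    linarith [dist_triangle a z₀ b, dist_comm a z₀]
  calc innerDist Ω (φ a) (φ b) ≤ η 2 * innerDist Ω (φ z₀) (φ b) :=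
        hQS a b z₀ ha hb hz₀ 2 zero_le_two hab'
    _ = η 2 * innerDist Ω (φ b) (φ z₀) := by rw [innerDist_comm]
    _ ≤ η 2 * (η s * innerDist Ω (φ w) (φ z₀)) :=
        mul_le_mul_of_nonneg_left (hQS b z₀ w hb hz₀ hw s hs hbw) hη2
    _ = η 2 * η s * innerDist Ω (φ z₀) (φ w) := by rw [innerDist_comm (φ w)]; ring

lemma IsInnerQuasisymmetricOn.innerDiam_image_le (hQS : IsInnerQuasisymmetricOn Ω η φ U)
    (hη : ∀ t, 0 ≤ t → 0 ≤ η t) {A : Set X} {z₀ w : X} {c₀ : ℝ} (hc₀ : 0 < c₀)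
    (hAU : A ⊆ U) (hA : Bornology.IsBounded A) (hball : ball z₀ (c₀ * diam A) ⊆ A)
    (hz₀ : z₀ ∈ A) (hw : w ∈ U) (hwA : w ∉ A) :
    innerDiam Ω (φ '' A) ≤ η 2 * η (1 / c₀) * innerDist Ω (φ z₀) (φ w) := by
  have hη2 := hη 2 zero_le_two
  have hηc₀ := hη (1 / c₀) (by positivity)
  have key : ∀ a ∈ A, ∀ b ∈ A, dist z₀ a ≤ dist z₀ b →
      innerDist Ω (φ a) (φ b) ≤ η 2 * η (1 / c₀) * innerDist Ω (φ z₀) (φ w) :=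
    fun a ha b hb hab => hQS.innerDist_le_of_dist_le hη2 (hAU ha) (hAU hb) (hAU hz₀) hw
      (by positivity) hab (dist_le_one_div_mul_dist_of_ball_subset hc₀ hA hball hz₀ hb hwA)
  refine innerDiam_le (by have := innerDist_nonneg (Ω := Ω) (φ z₀) (φ w); positivity) ?_
  rintro _ ⟨a, ha, rfl⟩ _ ⟨b, hb, rfl⟩
  rcases le_total (dist z₀ a) (dist z₀ b) with h | h
  · exact key a ha b hb h
  · rw [innerDist_comm]
    exact key b hb a ha h

end Quasisymmetry

theorem stmt11_general (J c₀ : ℝ) (η : ℝ → ℝ) (hc₀ : 0 < c₀)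
    (hη0 : ∀ t, 0 ≤ t → 0 ≤ η t) :
    ∃ c : ℝ, 0 < c ∧ c < 1 ∧
      ∀ (Ω : Set ℂ) (x₀ : ℂ) (φ : ℂ → ℂ) (A : Set ℂ) (z₀ : ℂ),
        IsJordanDomain Ω → IsJohnDomain J Ω x₀ →
        DifferentiableOn ℂ φ (Metric.ball 0 1) → Set.InjOn φ (Metric.ball 0 1) →
        φ '' Metric.ball 0 1 = Ω → φ 0 = x₀ →
        (∀ z x y : ℂ, z ∈ Metric.ball (0:ℂ) 1 → x ∈ Metric.ball (0:ℂ) 1 →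
          y ∈ Metric.ball (0:ℂ) 1 → ∀ t : ℝ, 0 ≤ t → dist z x ≤ t * dist y x →
            innerDist Ω (φ z) (φ x) ≤ η t * innerDist Ω (φ y) (φ x)) →
        A ⊆ Metric.ball 0 1 → A.Nonempty →
        Metric.ball z₀ (c₀ * Metric.diam A) ⊆ A →
        {y | y ∈ Ω ∧ innerDist Ω (φ z₀) y < c * innerDiam Ω (φ '' A)} ⊆ φ '' A := by
  set P := η 2 * η (1 / c₀)
  have hP : 0 ≤ P := mul_nonneg (hη0 2 zero_le_two) (hη0 _ (by positivity))
  refine ⟨1 / (P + 2), by positivity, by rw [div_lt_one (by linarith)]; linarith, ?_⟩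
  rintro Ω x₀ φ A z₀ - - - - himg - hQS hAU - hball _ ⟨hy, hlt⟩
  obtain ⟨w, hw, rfl⟩ := himg ▸ hy
  by_contra hwA
  have hA : Bornology.IsBounded A := isBounded_ball.subset hAU
  have hdiam : innerDiam Ω (φ '' A) ≤ P * innerDist Ω (φ z₀) (φ w) := by
    rcases (diam_nonneg (s := A)).eq_or_lt with h0 | hpos
    · have hsub : A.Subsingleton := Set.not_nontrivial_iff.1 fun h => (diam_pos h hA).ne' h0.symm
      exact (innerDiam_nonpos_of_subsingleton (hsub.image φ) (himg ▸ image_mono hAU)).trans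
        (mul_nonneg hP (innerDist_nonneg _ _))
    · exact IsInnerQuasisymmetricOn.innerDiam_image_le hQS hη0 hc₀ hAU hA hball
        (hball (mem_ball_self (by positivity))) hw fun h => hwA ⟨w, h, rfl⟩
  rw [one_div_mul_eq_div, lt_div_iff₀ (by positivity)] at hlt
  linarith [innerDist_nonneg (Ω := Ω) (φ z₀) (φ w)]

/-- If `φ : 𝔻 → Ω` is a conformal map onto a Jordan John domain which is
`η`-quasisymmetric with respect to the inner distance, and `A ⊂ 𝔻` contains the disk
`B(z₀, c₀ diam A)`, then an inner metric ball `B_Ω(φ(z₀), c·diam_Ω(φ(A)))` is contained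
in `φ(A)`, with `c = c(J, c₀) ∈ (0,1)`. -/
theorem stmt11 (J c₀ : ℝ) (η : ℝ → ℝ) (hJ : 0 < J) (hc₀ : 0 < c₀) (hc₀1 : c₀ ≤ 1)
    (hη0 : ∀ t, 0 ≤ t → 0 ≤ η t) (hηmono : MonotoneOn η (Set.Ici 0)) :
    ∃ c : ℝ, 0 < c ∧ c < 1 ∧
      ∀ (Ω : Set ℂ) (x₀ : ℂ) (φ : ℂ → ℂ) (A : Set ℂ) (z₀ : ℂ),
        IsJordanDomain Ω → IsJohnDomain J Ω x₀ →
        DifferentiableOn ℂ φ (Metric.ball 0 1) → Set.InjOn φ (Metric.ball 0 1) →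
        φ '' Metric.ball 0 1 = Ω → φ 0 = x₀ →
        (∀ z x y : ℂ, z ∈ Metric.ball (0:ℂ) 1 → x ∈ Metric.ball (0:ℂ) 1 →
          y ∈ Metric.ball (0:ℂ) 1 → ∀ t : ℝ, 0 ≤ t → dist z x ≤ t * dist y x →
            innerDist Ω (φ z) (φ x) ≤ η t * innerDist Ω (φ y) (φ x)) →
        A ⊆ Metric.ball 0 1 → A.Nonempty →
        Metric.ball z₀ (c₀ * Metric.diam A) ⊆ A →
        {y | y ∈ Ω ∧ innerDist Ω (φ z₀) y < c * innerDiam Ω (φ '' A)} ⊆ φ '' A :=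
  stmt11_general J c₀ η hc₀ hη0
end
end
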